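/- With the notation below, the connection Ricci tensor is symmetric (Ric_{bc} = Ric_{cb} for all b,c ∈ {t,r,θ,φ} at every point of the domain) if and only if a₁ + a₄ + 2a₅ = 0 identically, where a₁ = k₁,r − k₂,t + k₃k₄ − k₂k₆, a₄ = k₆,r − k₅,t + k₂k₆ − k₃k₄, and a₅ = k₈,r − k₉,t. -/

import Mathlib

noncomputable section

abbrev Pt : Type := Fin 8 → ℝ

def hIdx (a : Fin 4) : Fin 8 := ⟨a.val, by omega⟩
def vIdx (a : Fin 4) : Fin 8 := ⟨a.val + 4, by omega⟩

structure ConnData where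
  k1 : ℝ × ℝ → ℝ
  k2 : ℝ × ℝ → ℝ
  k3 : ℝ × ℝ → ℝ
  k4 : ℝ × ℝ → ℝ
  k5 : ℝ × ℝ → ℝ
  k6 : ℝ × ℝ → ℝ
  k7 : ℝ × ℝ → ℝ
  k8 : ℝ × ℝ → ℝ
  k9 : ℝ × ℝ → ℝ
  k10 : ℝ × ℝ → ℝ

def ConnData.Smooth (D : ConnData) : Prop :=
  ContDiff ℝ (⊤ : ℕ∞) D.k1 ∧ ContDiff ℝ (⊤ : ℕ∞) D.k2 ∧ ContDiff ℝ (⊤ : ℕ∞) D.k3 ∧ ContDiff ℝ (⊤ : ℕ∞) D.k4 ∧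
  ContDiff ℝ (⊤ : ℕ∞) D.k5 ∧ ContDiff ℝ (⊤ : ℕ∞) D.k6 ∧ ContDiff ℝ (⊤ : ℕ∞) D.k7 ∧ ContDiff ℝ (⊤ : ℕ∞) D.k8 ∧
  ContDiff ℝ (⊤ : ℕ∞) D.k9 ∧ ContDiff ℝ (⊤ : ℕ∞) D.k10

/-- Christoffel symbols: `Γmat D p c a b` is `Γ^c_{ab}` at the point `p`. -/
def Γmat (D : ConnData) (p : Pt) : Fin 4 → Matrix (Fin 4) (Fin 4) ℝ :=
  let x : ℝ × ℝ := (p 0, p 1)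
  let s : ℝ := Real.sin (p 2)
  let co : ℝ := Real.cos (p 2)
  ![!![D.k1 x, D.k2 x, 0, 0;
      D.k2 x, D.k3 x, 0, 0;
      0, 0, D.k7 x, 0;
      0, 0, 0, D.k7 x * s ^ 2],
    !![D.k4 x, D.k6 x, 0, 0;
      D.k6 x, D.k5 x, 0, 0;
      0, 0, D.k10 x, 0;
      0, 0, 0, D.k10 x * s ^ 2],
    !![0, 0, D.k8 x, 0;
      0, 0, D.k9 x, 0;
      D.k8 x, D.k9 x, 0, 0;
      0, 0, 0, -(s * co)],
    !![0, 0, 0, D.k8 x;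
      0, 0, 0, D.k9 x;
      0, 0, 0, co / s;
      D.k8 x, D.k9 x, co / s, 0]]

/-- `N^c_a = Σ_b Γ^c_{ab} ẋ^b`. -/
def Ncoef (D : ConnData) (c a : Fin 4) (p : Pt) : ℝ :=
  ∑ b : Fin 4, Γmat D p c a b * p (vIdx b)

/-- The horizontal vector field `δ_a` evaluated at `p`. -/
def δvf (D : ConnData) (a : Fin 4) (p : Pt) : Pt :=
  Pi.single (hIdx a) 1 - ∑ c : Fin 4, Pi.single (vIdx c) (Ncoef D c a p)

/-- `δ_a` acting as a derivation on functions. -/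
def δd (D : ConnData) (a : Fin 4) (f : Pt → ℝ) (p : Pt) : ℝ :=
  fderiv ℝ f p (δvf D a p)

/-- Vertical partial derivative `∂̇_a`. -/
def vd (a : Fin 4) (f : Pt → ℝ) (p : Pt) : ℝ :=
  fderiv ℝ f p (Pi.single (vIdx a) 1)

/-- Curvature `R^c_{ab} = δ_b(N^c_a) - δ_a(N^c_b)`. -/
def Rcurv (D : ConnData) (c a b : Fin 4) (p : Pt) : ℝ :=
  δd D b (Ncoef D c a) p - δd D a (Ncoef D c b) p

/-- Connection Ricci tensor `Ric_{bc} = Σ_a ∂̇_b (R^a_{ca})`. -/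
def Ric (D : ConnData) (b c : Fin 4) (p : Pt) : ℝ :=
  ∑ a : Fin 4, vd b (Rcurv D a c a) p

/-- Lie bracket of vector fields on `ℝ⁸`. -/
def lie (X Y : Pt → Pt) (p : Pt) : Pt :=
  fderiv ℝ Y p (X p) - fderiv ℝ X p (Y p)

/-- Partial derivative w.r.t. `t`. -/
def pdt (f : ℝ × ℝ → ℝ) (x : ℝ × ℝ) : ℝ := fderiv ℝ f x (1, 0)
/-- Partial derivative w.r.t. `r`. -/
def pdr (f : ℝ × ℝ → ℝ) (x : ℝ × ℝ) : ℝ := fderiv ℝ f x (0, 1)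

def a1 (D : ConnData) (x : ℝ × ℝ) : ℝ :=
  pdr D.k1 x - pdt D.k2 x + D.k3 x * D.k4 x - D.k2 x * D.k6 x
def a2 (D : ConnData) (x : ℝ × ℝ) : ℝ :=
  pdr D.k2 x - pdt D.k3 x + (D.k2 x) ^ 2 + D.k3 x * D.k6 x - D.k1 x * D.k3 x - D.k2 x * D.k5 x
def a3 (D : ConnData) (x : ℝ × ℝ) : ℝ :=
  pdr D.k4 x - pdt D.k6 x + D.k1 x * D.k6 x + D.k4 x * D.k5 x - D.k2 x * D.k4 x - (D.k6 x) ^ 2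
def a4 (D : ConnData) (x : ℝ × ℝ) : ℝ :=
  pdr D.k6 x - pdt D.k5 x + D.k2 x * D.k6 x - D.k3 x * D.k4 x
def a5 (D : ConnData) (x : ℝ × ℝ) : ℝ := pdr D.k8 x - pdt D.k9 x
def a6 (D : ConnData) (x : ℝ × ℝ) : ℝ :=
  -pdt D.k7 x + D.k7 x * D.k8 x - D.k1 x * D.k7 x - D.k2 x * D.k10 x
def a7 (D : ConnData) (x : ℝ × ℝ) : ℝ :=
  -pdt D.k10 x + D.k8 x * D.k10 x - D.k4 x * D.k7 x - D.k6 x * D.k10 x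
def a8 (D : ConnData) (x : ℝ × ℝ) : ℝ :=
  -pdt D.k8 x + D.k1 x * D.k8 x + D.k4 x * D.k9 x - (D.k8 x) ^ 2
def a9 (D : ConnData) (x : ℝ × ℝ) : ℝ :=
  -pdt D.k9 x + D.k2 x * D.k8 x + D.k6 x * D.k9 x - D.k8 x * D.k9 x
def a10 (D : ConnData) (x : ℝ × ℝ) : ℝ :=
  -pdr D.k7 x + D.k7 x * D.k9 x - D.k2 x * D.k7 x - D.k3 x * D.k10 x
def a11 (D : ConnData) (x : ℝ × ℝ) : ℝ :=
  -pdr D.k10 x + D.k9 x * D.k10 x - D.k6 x * D.k7 x - D.k5 x * D.k10 x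
def a12 (D : ConnData) (x : ℝ × ℝ) : ℝ :=
  -pdr D.k8 x + D.k2 x * D.k8 x + D.k6 x * D.k9 x - D.k8 x * D.k9 x
def a13 (D : ConnData) (x : ℝ × ℝ) : ℝ :=
  -pdr D.k9 x + D.k3 x * D.k8 x + D.k5 x * D.k9 x - (D.k9 x) ^ 2
def a14 (D : ConnData) (x : ℝ × ℝ) : ℝ := 1 + D.k7 x * D.k8 x + D.k9 x * D.k10 x


def prj (i : Fin 8) : Pt →L[ℝ] ℝ := ContinuousLinearMap.proj i
@[simp] lemma prj_apply (i : Fin 8) (v : Pt) : prj i v = v i := rfl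
def L3 (ft fr fθ : ℝ) : Pt →L[ℝ] ℝ := ft • prj 0 + fr • prj 1 + fθ • prj 2
@[simp] lemma L3_apply (ft fr fθ : ℝ) (v : Pt) :
    L3 ft fr fθ v = ft * v 0 + fr * v 1 + fθ * v 2 := by
  simp [L3]

def Der3 (f : Pt → ℝ) (ft fr fθ : ℝ) (p : Pt) : Prop := HasFDerivAt f (L3 ft fr fθ) p

lemma Der3.hasFDerivAt {f ft fr fθ p} (h : Der3 f ft fr fθ p) : HasFDerivAt f (L3 ft fr fθ) p := h

lemma der3_const (c : ℝ) (p : Pt) : Der3 (fun _ => c) 0 0 0 p := by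
  have h : L3 0 0 0 = 0 := by ext v; simp [L3]
  rw [Der3, h]; exact hasFDerivAt_const c p

lemma Der3.add {f g ft fr fθ gt gr gθ p} (hf : Der3 f ft fr fθ p) (hg : Der3 g gt gr gθ p) :
    Der3 (fun q => f q + g q) (ft + gt) (fr + gr) (fθ + gθ) p := by
  have h := HasFDerivAt.add hf hg
  have e : L3 ft fr fθ + L3 gt gr gθ = L3 (ft+gt) (fr+gr) (fθ+gθ) := by ext v; simp; ring
  rwa [e] at h

lemma Der3.neg {f ft fr fθ p} (hf : Der3 f ft fr fθ p) :
    Der3 (fun q => -f q) (-ft) (-fr) (-fθ) p := by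
  have h := hf.hasFDerivAt.neg
  have e : -L3 ft fr fθ = L3 (-ft) (-fr) (-fθ) := by ext v; simp; ring
  rwa [e] at h

lemma Der3.sub {f g ft fr fθ gt gr gθ p} (hf : Der3 f ft fr fθ p) (hg : Der3 g gt gr gθ p) :
    Der3 (fun q => f q - g q) (ft - gt) (fr - gr) (fθ - gθ) p := by
  have h := HasFDerivAt.sub hf hg
  have e : L3 ft fr fθ - L3 gt gr gθ = L3 (ft-gt) (fr-gr) (fθ-gθ) := by ext v; simp; ring
  rwa [e] at h

lemma Der3.mul {f g ft fr fθ gt gr gθ p} (hf : Der3 f ft fr fθ p) (hg : Der3 g gt gr gθ p) :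
    Der3 (fun q => f q * g q) (f p * gt + g p * ft) (f p * gr + g p * fr) (f p * gθ + g p * fθ) p := by
  have h := HasFDerivAt.mul hf.hasFDerivAt hg.hasFDerivAt
  have e : f p • L3 gt gr gθ + g p • L3 ft fr fθ
      = L3 (f p * gt + g p * ft) (f p * gr + g p * fr) (f p * gθ + g p * fθ) := by
    ext v; simp; ring
  rwa [e] at h

lemma Der3.inv {f ft fr fθ p} (hf : Der3 f ft fr fθ p) (h0 : f p ≠ 0) :
    Der3 (fun q => (f q)⁻¹) (-(f p ^ 2)⁻¹ * ft) (-(f p ^ 2)⁻¹ * fr) (-(f p ^ 2)⁻¹ * fθ) p := by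
  have h := (hasDerivAt_inv h0).comp_hasFDerivAt p hf.hasFDerivAt
  have e : -(f p ^ 2)⁻¹ • L3 ft fr fθ
      = L3 (-(f p ^ 2)⁻¹ * ft) (-(f p ^ 2)⁻¹ * fr) (-(f p ^ 2)⁻¹ * fθ) := by ext v; simp; ring
  rw [Der3, ← e]; exact h

lemma Der3.congr_coef {f ft fr fθ ft' fr' fθ' p} (hf : Der3 f ft fr fθ p)
    (h1 : ft = ft') (h2 : fr = fr') (h3 : fθ = fθ') : Der3 f ft' fr' fθ' p := by
  subst h1; subst h2; subst h3; exact hf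

-- atom: base function of (t,r)
lemma der3_bk {f : ℝ × ℝ → ℝ} (p : Pt) (hf : DifferentiableAt ℝ f (p 0, p 1)) :
    Der3 (fun q => f (q 0, q 1)) (pdt f (p 0, p 1)) (pdr f (p 0, p 1)) 0 p := by
  have hπ : HasFDerivAt (fun q : Pt => ((q 0, q 1) : ℝ × ℝ)) ((prj 0).prod (prj 1)) p :=
    ((prj 0).prod (prj 1)).hasFDerivAt
  have h := (hf.hasFDerivAt.comp p hπ)
  have e : (fderiv ℝ f (p 0, p 1)).comp ((prj 0).prod (prj 1))
      = L3 (pdt f (p 0, p 1)) (pdr f (p 0, p 1)) 0 := by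
    ext v
    have hv : ((v 0, v 1) : ℝ × ℝ) = v 0 • ((1:ℝ), (0:ℝ)) + v 1 • ((0:ℝ), (1:ℝ)) := by
      simp [Prod.ext_iff]
    simp only [ContinuousLinearMap.comp_apply, ContinuousLinearMap.prod_apply, prj_apply, L3_apply]
    rw [hv, map_add, map_smul, map_smul]
    simp [pdt, pdr]; ring
  rwa [e] at h

lemma der3_sin (p : Pt) : Der3 (fun q => Real.sin (q 2)) 0 0 (Real.cos (p 2)) p := by
  have h := (Real.hasDerivAt_sin (p 2)).comp_hasFDerivAt p (prj 2).hasFDerivAt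
  have e : Real.cos (p 2) • prj 2 = L3 0 0 (Real.cos (p 2)) := by ext v; simp
  rw [Der3, ← e]; exact h

lemma der3_cos (p : Pt) : Der3 (fun q => Real.cos (q 2)) 0 0 (-Real.sin (p 2)) p := by
  have h := (Real.hasDerivAt_cos (p 2)).comp_hasFDerivAt p (prj 2).hasFDerivAt
  have e : -Real.sin (p 2) • prj 2 = L3 0 0 (-Real.sin (p 2)) := by ext v; simp
  rw [Der3, ← e]; exact h

-- helper Der3 lemmas for composite entries (to append after c1)
lemma der3_ks2 {f : ℝ × ℝ → ℝ} (p : Pt) (hf : DifferentiableAt ℝ f (p 0, p 1)) :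
    Der3 (fun q => f (q 0, q 1) * Real.sin (q 2) ^ 2)
      (pdt f (p 0, p 1) * Real.sin (p 2) ^ 2) (pdr f (p 0, p 1) * Real.sin (p 2) ^ 2)
      (f (p 0, p 1) * (2 * Real.sin (p 2) * Real.cos (p 2))) p := by
  have h := (der3_bk p hf).mul ((der3_sin p).mul (der3_sin p))
  simp only [pow_two]
  exact h.congr_coef (by ring) (by ring) (by ring)

lemma der3_msc (p : Pt) :
    Der3 (fun q => -(Real.sin (q 2) * Real.cos (q 2))) 0 0
      (Real.sin (p 2) ^ 2 - Real.cos (p 2) ^ 2) p :=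
  ((der3_sin p).mul (der3_cos p)).neg.congr_coef (by ring) (by ring) (by ring)

lemma der3_cot (p : Pt) (hs : Real.sin (p 2) ≠ 0) :
    Der3 (fun q => Real.cos (q 2) / Real.sin (q 2)) 0 0
      (-(Real.cos (p 2) ^ 2 / Real.sin (p 2) ^ 2) - 1) p := by
  simp only [div_eq_mul_inv]
  refine ((der3_cos p).mul ((der3_sin p).inv hs)).congr_coef (by ring) (by ring) ?_
  field_simp
  ring

/-- `t`-derivatives of the Christoffel matrices. -/
def Γt (D : ConnData) (p : Pt) : Fin 4 → Matrix (Fin 4) (Fin 4) ℝ :=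
  let x : ℝ × ℝ := (p 0, p 1)
  let s : ℝ := Real.sin (p 2)
  ![!![pdt D.k1 x, pdt D.k2 x, 0, 0; pdt D.k2 x, pdt D.k3 x, 0, 0;
      0, 0, pdt D.k7 x, 0; 0, 0, 0, pdt D.k7 x * s ^ 2],
    !![pdt D.k4 x, pdt D.k6 x, 0, 0; pdt D.k6 x, pdt D.k5 x, 0, 0;
      0, 0, pdt D.k10 x, 0; 0, 0, 0, pdt D.k10 x * s ^ 2],
    !![0, 0, pdt D.k8 x, 0; 0, 0, pdt D.k9 x, 0; pdt D.k8 x, pdt D.k9 x, 0, 0; 0, 0, 0, 0],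
    !![0, 0, 0, pdt D.k8 x; 0, 0, 0, pdt D.k9 x; 0, 0, 0, 0; pdt D.k8 x, pdt D.k9 x, 0, 0]]

/-- `r`-derivatives of the Christoffel matrices. -/
def Γr (D : ConnData) (p : Pt) : Fin 4 → Matrix (Fin 4) (Fin 4) ℝ :=
  let x : ℝ × ℝ := (p 0, p 1)
  let s : ℝ := Real.sin (p 2)
  ![!![pdr D.k1 x, pdr D.k2 x, 0, 0; pdr D.k2 x, pdr D.k3 x, 0, 0;
      0, 0, pdr D.k7 x, 0; 0, 0, 0, pdr D.k7 x * s ^ 2],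
    !![pdr D.k4 x, pdr D.k6 x, 0, 0; pdr D.k6 x, pdr D.k5 x, 0, 0;
      0, 0, pdr D.k10 x, 0; 0, 0, 0, pdr D.k10 x * s ^ 2],
    !![0, 0, pdr D.k8 x, 0; 0, 0, pdr D.k9 x, 0; pdr D.k8 x, pdr D.k9 x, 0, 0; 0, 0, 0, 0],
    !![0, 0, 0, pdr D.k8 x; 0, 0, 0, pdr D.k9 x; 0, 0, 0, 0; pdr D.k8 x, pdr D.k9 x, 0, 0]]

/-- `θ`-derivatives of the Christoffel matrices. -/
def Γθ (D : ConnData) (p : Pt) : Fin 4 → Matrix (Fin 4) (Fin 4) ℝ :=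
  let x : ℝ × ℝ := (p 0, p 1)
  let s : ℝ := Real.sin (p 2)
  let co : ℝ := Real.cos (p 2)
  ![!![0,0,0,0; 0,0,0,0; 0,0,0,0; 0,0,0, D.k7 x * (2 * s * co)],
    !![0,0,0,0; 0,0,0,0; 0,0,0,0; 0,0,0, D.k10 x * (2 * s * co)],
    !![0,0,0,0; 0,0,0,0; 0,0,0,0; 0,0,0, s ^ 2 - co ^ 2],
    !![0,0,0,0; 0,0,0,0; 0,0,0, -(co ^ 2 / s ^ 2) - 1; 0,0, -(co ^ 2 / s ^ 2) - 1, 0]]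

lemma Γ_der3 {D : ConnData} (hD : D.Smooth) (p : Pt) (hs : Real.sin (p 2) ≠ 0)
    (c a b : Fin 4) :
    Der3 (fun q => Γmat D q c a b) (Γt D p c a b) (Γr D p c a b) (Γθ D p c a b) p := by
  obtain ⟨h1, h2, h3, h4, h5, h6, h7, h8, h9, h10⟩ := hD
  fin_cases c <;> fin_cases a <;> fin_cases b <;>
    simp only [Γmat, Γt, Γr, Γθ, Matrix.cons_val', Matrix.cons_val_zero, Matrix.cons_val_one,
      Matrix.head_cons, Matrix.empty_val', Matrix.cons_val_fin_one, Matrix.head_fin_const,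
      Matrix.cons_val_two, Matrix.cons_val_three, Matrix.tail_cons, Matrix.of_apply,
      Fin.isValue, Matrix.cons_val, Fin.zero_eta, Fin.mk_one, Fin.reduceFinMk] <;>
    first
      | exact der3_const 0 p
      | exact der3_bk p ((h1.differentiable (by simp)).differentiableAt)
      | exact der3_bk p ((h2.differentiable (by simp)).differentiableAt)
      | exact der3_bk p ((h3.differentiable (by simp)).differentiableAt)
      | exact der3_bk p ((h4.differentiable (by simp)).differentiableAt)
      | exact der3_bk p ((h5.differentiable (by simp)).differentiableAt)
      | exact der3_bk p ((h6.differentiable (by simp)).differentiableAt)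
      | exact der3_bk p ((h7.differentiable (by simp)).differentiableAt)
      | exact der3_bk p ((h8.differentiable (by simp)).differentiableAt)
      | exact der3_bk p ((h9.differentiable (by simp)).differentiableAt)
      | exact der3_bk p ((h10.differentiable (by simp)).differentiableAt)
      | exact der3_ks2 p ((h7.differentiable (by simp)).differentiableAt)
      | exact der3_ks2 p ((h10.differentiable (by simp)).differentiableAt)
      | exact der3_msc p
      | exact der3_cot p hs

/-- The horizontal-direction derivative matrices, indexed by direction. -/
def ΓD (D : ConnData) (b : Fin 4) (p : Pt) : Fin 4 → Matrix (Fin 4) (Fin 4) ℝ :=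
  ![Γt D p, Γr D p, Γθ D p, fun _ => 0] b

def NC' (D : ConnData) (c a : Fin 4) (p : Pt) : Pt →L[ℝ] ℝ :=
  ∑ b : Fin 4, (Γmat D p c a b • prj (vIdx b) +
    p (vIdx b) • L3 (Γt D p c a b) (Γr D p c a b) (Γθ D p c a b))

lemma Ncoef_hasFDeriv {D : ConnData} (hD : D.Smooth) (c a : Fin 4) (p : Pt)
    (hs : Real.sin (p 2) ≠ 0) : HasFDerivAt (Ncoef D c a) (NC' D c a p) p := by
  have h : ∀ b ∈ (Finset.univ : Finset (Fin 4)),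
      HasFDerivAt (fun q : Pt => Γmat D q c a b * q (vIdx b))
        (Γmat D p c a b • prj (vIdx b) +
          p (vIdx b) • L3 (Γt D p c a b) (Γr D p c a b) (Γθ D p c a b)) p := by
    intro b _
    exact (Γ_der3 hD p hs c a b).hasFDerivAt.mul (prj (vIdx b)).hasFDerivAt
  exact HasFDerivAt.sum h

lemma vIdx_ne_hIdx (e b : Fin 4) : vIdx e ≠ hIdx b := by
  intro h
  have h2 := congrArg Fin.val h
  simp only [vIdx, hIdx] at h2
  omega

lemma vIdx_inj_iff (e c : Fin 4) : (vIdx e = vIdx c) ↔ e = c := by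
  constructor
  · intro h
    have h2 := congrArg Fin.val h
    simp only [vIdx] at h2
    exact Fin.ext (by omega)
  · rintro rfl; rfl

@[simp] lemma δvf_vapp (D : ConnData) (b : Fin 4) (p : Pt) (e : Fin 4) :
    δvf D b p (vIdx e) = -Ncoef D e b p := by
  simp only [δvf, Pi.sub_apply, Finset.sum_apply, Pi.single_apply]
  rw [if_neg (vIdx_ne_hIdx e b)]
  have : ∀ c : Fin 4, (if vIdx e = vIdx c then Ncoef D c b p else 0)
      = if e = c then Ncoef D c b p else 0 := by
    intro c
    by_cases h : e = c
    · subst h; simp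
    · rw [if_neg h, if_neg (fun hh => h ((vIdx_inj_iff e c).1 hh))]
  simp [this, Finset.sum_ite_eq]

lemma δvf_happ (D : ConnData) (b : Fin 4) (p : Pt) (j : Fin 8) (hj : j.val < 4) :
    δvf D b p j = if j = hIdx b then 1 else 0 := by
  simp only [δvf, Pi.sub_apply, Finset.sum_apply, Pi.single_apply]
  have : ∀ c : Fin 4, (if j = vIdx c then Ncoef D c b p else 0) = 0 := by
    intro c; rw [if_neg]
    intro h
    have h2 := congrArg Fin.val h
    simp only [vIdx] at h2
    omega
  simp [this]

lemma δd_Ncoef {D : ConnData} (hD : D.Smooth) (p : Pt) (hs : Real.sin (p 2) ≠ 0)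
    (b c a : Fin 4) :
    δd D b (Ncoef D c a) p = (∑ e : Fin 4, p (vIdx e) * ΓD D b p c a e)
      - ∑ e : Fin 4, Γmat D p c a e * Ncoef D e b p := by
  rw [δd, (Ncoef_hasFDeriv hD c a p hs).fderiv, NC']
  simp only [ContinuousLinearMap.sum_apply, ContinuousLinearMap.add_apply,
    ContinuousLinearMap.coe_smul', Pi.smul_apply, prj_apply, L3_apply, smul_eq_mul,
    Fin.sum_univ_four, δvf_vapp]
  rw [δvf_happ D b p 0 (by norm_num), δvf_happ D b p 1 (by norm_num),
    δvf_happ D b p 2 (by norm_num)]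
  fin_cases b <;>
    simp only [ΓD, hIdx, Matrix.cons_val_zero, Matrix.cons_val_one, Matrix.head_cons,
      Matrix.cons_val_two, Matrix.cons_val_three, Matrix.tail_cons, show ((0:Fin 8)) = ⟨0, by omega⟩ from rfl] <;>
    norm_num [Fin.ext_iff] <;> ring

def RiemC (D : ConnData) (c e a b : Fin 4) (p : Pt) : ℝ :=
  ΓD D b p c a e - ΓD D a p c b e +
    ∑ d : Fin 4, (Γmat D p c b d * Γmat D p d a e - Γmat D p c a d * Γmat D p d b e)

lemma rcurv_eq {D : ConnData} (hD : D.Smooth) (p : Pt) (hs : Real.sin (p 2) ≠ 0)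
    (c a b : Fin 4) :
    Rcurv D c a b p = ∑ e : Fin 4, p (vIdx e) * RiemC D c e a b p := by
  rw [Rcurv, δd_Ncoef hD p hs b c a, δd_Ncoef hD p hs a c b]
  simp only [RiemC, Ncoef, Fin.sum_univ_four]
  ring

def VF (f : Pt → ℝ) (p : Pt) : Prop := ∃ ft fr fθ, Der3 f ft fr fθ p

lemma vf_const (c : ℝ) (p : Pt) : VF (fun _ => c) p := ⟨0, 0, 0, der3_const c p⟩

lemma VF.add {f g : Pt → ℝ} {p : Pt} (hf : VF f p) (hg : VF g p) :
    VF (fun q => f q + g q) p := by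
  obtain ⟨a1, a2, a3, hf⟩ := hf; obtain ⟨b1, b2, b3, hg⟩ := hg
  exact ⟨_, _, _, hf.add hg⟩

lemma VF.sub {f g : Pt → ℝ} {p : Pt} (hf : VF f p) (hg : VF g p) :
    VF (fun q => f q - g q) p := by
  obtain ⟨a1, a2, a3, hf⟩ := hf; obtain ⟨b1, b2, b3, hg⟩ := hg
  exact ⟨_, _, _, hf.sub hg⟩

lemma VF.mul {f g : Pt → ℝ} {p : Pt} (hf : VF f p) (hg : VF g p) :
    VF (fun q => f q * g q) p := by
  obtain ⟨a1, a2, a3, hf⟩ := hf; obtain ⟨b1, b2, b3, hg⟩ := hg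
  exact ⟨_, _, _, hf.mul hg⟩

lemma contDiff_pdt {f : ℝ × ℝ → ℝ} (hf : ContDiff ℝ (⊤ : ℕ∞) f) : ContDiff ℝ (⊤ : ℕ∞) (pdt f) := by
  have h : ContDiff ℝ (⊤ : ℕ∞) (fderiv ℝ f) := hf.fderiv_right (by exact_mod_cast le_top)
  exact (ContinuousLinearMap.apply ℝ ℝ ((1, 0) : ℝ × ℝ)).contDiff.comp h

lemma contDiff_pdr {f : ℝ × ℝ → ℝ} (hf : ContDiff ℝ (⊤ : ℕ∞) f) : ContDiff ℝ (⊤ : ℕ∞) (pdr f) := by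
  have h : ContDiff ℝ (⊤ : ℕ∞) (fderiv ℝ f) := hf.fderiv_right (by exact_mod_cast le_top)
  exact (ContinuousLinearMap.apply ℝ ℝ ((0, 1) : ℝ × ℝ)).contDiff.comp h

lemma vf_bk {f : ℝ × ℝ → ℝ} (p : Pt) (hf : DifferentiableAt ℝ f (p 0, p 1)) :
    VF (fun q => f (q 0, q 1)) p := ⟨_, _, _, der3_bk p hf⟩

lemma vf_ks2 {f : ℝ × ℝ → ℝ} (p : Pt) (hf : DifferentiableAt ℝ f (p 0, p 1)) :
    VF (fun q => f (q 0, q 1) * Real.sin (q 2) ^ 2) p := ⟨_, _, _, der3_ks2 p hf⟩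

lemma vf_k2sc {f : ℝ × ℝ → ℝ} (p : Pt) (hf : DifferentiableAt ℝ f (p 0, p 1)) :
    VF (fun q => f (q 0, q 1) * (2 * Real.sin (q 2) * Real.cos (q 2))) p := by
  refine (vf_bk p hf).mul (VF.mul (VF.mul (vf_const 2 p) ?_) ?_)
  · exact ⟨_, _, _, der3_sin p⟩
  · exact ⟨_, _, _, der3_cos p⟩

lemma vf_s2mc2 (p : Pt) : VF (fun q => Real.sin (q 2) ^ 2 - Real.cos (q 2) ^ 2) p := by
  simp only [pow_two]
  exact VF.sub (VF.mul ⟨_,_,_,der3_sin p⟩ ⟨_,_,_,der3_sin p⟩)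
    (VF.mul ⟨_,_,_,der3_cos p⟩ ⟨_,_,_,der3_cos p⟩)

lemma vf_cotθ (p : Pt) (hs : Real.sin (p 2) ≠ 0) :
    VF (fun q => -(Real.cos (q 2) ^ 2 / Real.sin (q 2) ^ 2) - 1) p := by
  simp only [pow_two, div_eq_mul_inv]
  have hinv : VF (fun q => (Real.sin (q 2) * Real.sin (q 2))⁻¹) p := by
    refine ⟨_, _, _, Der3.inv ((der3_sin p).mul (der3_sin p)) ?_⟩
    exact mul_ne_zero hs hs
  have hc2 : VF (fun q => Real.cos (q 2) * Real.cos (q 2)) p :=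
    VF.mul ⟨_,_,_,der3_cos p⟩ ⟨_,_,_,der3_cos p⟩
  have h := VF.sub (VF.sub (vf_const 0 p) (hc2.mul hinv)) (vf_const 1 p)
  have e : (fun q : Pt => (0:ℝ) - Real.cos (q 2) * Real.cos (q 2) * (Real.sin (q 2) * Real.sin (q 2))⁻¹ - 1)
      = fun q => -(Real.cos (q 2) * Real.cos (q 2) * (Real.sin (q 2) * Real.sin (q 2))⁻¹) - 1 := by
    funext q; ring
  rwa [e] at h

lemma Γmat_vf {D : ConnData} (hD : D.Smooth) (p : Pt) (hs : Real.sin (p 2) ≠ 0)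
    (c a b : Fin 4) : VF (fun q => Γmat D q c a b) p :=
  ⟨_, _, _, Γ_der3 hD p hs c a b⟩

set_option maxHeartbeats 1000000 in
lemma Γt_vf {D : ConnData} (hD : D.Smooth) (p : Pt) (hs : Real.sin (p 2) ≠ 0)
    (c a e : Fin 4) : VF (fun q => Γt D q c a e) p := by
  obtain ⟨h1, h2, h3, h4, h5, h6, h7, h8, h9, h10⟩ := hD
  have d1 := (contDiff_pdt h1).differentiable (by simp); have r1 := (contDiff_pdr h1).differentiable (by simp)
  have d2 := (contDiff_pdt h2).differentiable (by simp); have r2 := (contDiff_pdr h2).differentiable (by simp)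
  have d3 := (contDiff_pdt h3).differentiable (by simp); have r3 := (contDiff_pdr h3).differentiable (by simp)
  have d4 := (contDiff_pdt h4).differentiable (by simp); have r4 := (contDiff_pdr h4).differentiable (by simp)
  have d5 := (contDiff_pdt h5).differentiable (by simp); have r5 := (contDiff_pdr h5).differentiable (by simp)
  have d6 := (contDiff_pdt h6).differentiable (by simp); have r6 := (contDiff_pdr h6).differentiable (by simp)
  have d7 := (contDiff_pdt h7).differentiable (by simp); have r7 := (contDiff_pdr h7).differentiable (by simp)
  have d8 := (contDiff_pdt h8).differentiable (by simp); have r8 := (contDiff_pdr h8).differentiable (by simp)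
  have d9 := (contDiff_pdt h9).differentiable (by simp); have r9 := (contDiff_pdr h9).differentiable (by simp)
  have d10 := (contDiff_pdt h10).differentiable (by simp); have r10 := (contDiff_pdr h10).differentiable (by simp)
  fin_cases c <;> fin_cases a <;> fin_cases e <;>
    simp only [Γt, Matrix.cons_val', Matrix.cons_val_zero, Matrix.cons_val_one,
      Matrix.head_cons, Matrix.empty_val', Matrix.cons_val_fin_one, Matrix.head_fin_const,
      Matrix.cons_val_two, Matrix.cons_val_three, Matrix.tail_cons, Matrix.of_apply,
      Fin.isValue, Matrix.cons_val, Fin.zero_eta, Fin.mk_one, Fin.reduceFinMk] <;>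
    first
      | exact vf_const 0 p
      | exact vf_const _ p
      | exact vf_bk p (d1.differentiableAt) | exact vf_bk p (r1.differentiableAt)
      | exact vf_bk p (d2.differentiableAt) | exact vf_bk p (r2.differentiableAt)
      | exact vf_bk p (d3.differentiableAt) | exact vf_bk p (r3.differentiableAt)
      | exact vf_bk p (d4.differentiableAt) | exact vf_bk p (r4.differentiableAt)
      | exact vf_bk p (d5.differentiableAt) | exact vf_bk p (r5.differentiableAt)
      | exact vf_bk p (d6.differentiableAt) | exact vf_bk p (r6.differentiableAt)
      | exact vf_bk p (d7.differentiableAt) | exact vf_bk p (r7.differentiableAt)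
      | exact vf_bk p (d8.differentiableAt) | exact vf_bk p (r8.differentiableAt)
      | exact vf_bk p (d9.differentiableAt) | exact vf_bk p (r9.differentiableAt)
      | exact vf_bk p (d10.differentiableAt) | exact vf_bk p (r10.differentiableAt)
      | exact vf_ks2 p (d7.differentiableAt) | exact vf_ks2 p (r7.differentiableAt)
      | exact vf_ks2 p (d10.differentiableAt) | exact vf_ks2 p (r10.differentiableAt)
      | exact vf_k2sc p (((h7.differentiable (by simp))).differentiableAt)
      | exact vf_k2sc p (((h10.differentiable (by simp))).differentiableAt)
      | exact vf_s2mc2 p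
      | exact vf_cotθ p hs

set_option maxHeartbeats 1000000 in
lemma Γr_vf {D : ConnData} (hD : D.Smooth) (p : Pt) (hs : Real.sin (p 2) ≠ 0)
    (c a e : Fin 4) : VF (fun q => Γr D q c a e) p := by
  obtain ⟨h1, h2, h3, h4, h5, h6, h7, h8, h9, h10⟩ := hD
  have d1 := (contDiff_pdt h1).differentiable (by simp); have r1 := (contDiff_pdr h1).differentiable (by simp)
  have d2 := (contDiff_pdt h2).differentiable (by simp); have r2 := (contDiff_pdr h2).differentiable (by simp)
  have d3 := (contDiff_pdt h3).differentiable (by simp); have r3 := (contDiff_pdr h3).differentiable (by simp)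
  have d4 := (contDiff_pdt h4).differentiable (by simp); have r4 := (contDiff_pdr h4).differentiable (by simp)
  have d5 := (contDiff_pdt h5).differentiable (by simp); have r5 := (contDiff_pdr h5).differentiable (by simp)
  have d6 := (contDiff_pdt h6).differentiable (by simp); have r6 := (contDiff_pdr h6).differentiable (by simp)
  have d7 := (contDiff_pdt h7).differentiable (by simp); have r7 := (contDiff_pdr h7).differentiable (by simp)
  have d8 := (contDiff_pdt h8).differentiable (by simp); have r8 := (contDiff_pdr h8).differentiable (by simp)
  have d9 := (contDiff_pdt h9).differentiable (by simp); have r9 := (contDiff_pdr h9).differentiable (by simp)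
  have d10 := (contDiff_pdt h10).differentiable (by simp); have r10 := (contDiff_pdr h10).differentiable (by simp)
  fin_cases c <;> fin_cases a <;> fin_cases e <;>
    simp only [Γr, Matrix.cons_val', Matrix.cons_val_zero, Matrix.cons_val_one,
      Matrix.head_cons, Matrix.empty_val', Matrix.cons_val_fin_one, Matrix.head_fin_const,
      Matrix.cons_val_two, Matrix.cons_val_three, Matrix.tail_cons, Matrix.of_apply,
      Fin.isValue, Matrix.cons_val, Fin.zero_eta, Fin.mk_one, Fin.reduceFinMk] <;>
    first
      | exact vf_const 0 p
      | exact vf_const _ p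
      | exact vf_bk p (d1.differentiableAt) | exact vf_bk p (r1.differentiableAt)
      | exact vf_bk p (d2.differentiableAt) | exact vf_bk p (r2.differentiableAt)
      | exact vf_bk p (d3.differentiableAt) | exact vf_bk p (r3.differentiableAt)
      | exact vf_bk p (d4.differentiableAt) | exact vf_bk p (r4.differentiableAt)
      | exact vf_bk p (d5.differentiableAt) | exact vf_bk p (r5.differentiableAt)
      | exact vf_bk p (d6.differentiableAt) | exact vf_bk p (r6.differentiableAt)
      | exact vf_bk p (d7.differentiableAt) | exact vf_bk p (r7.differentiableAt)
      | exact vf_bk p (d8.differentiableAt) | exact vf_bk p (r8.differentiableAt)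
      | exact vf_bk p (d9.differentiableAt) | exact vf_bk p (r9.differentiableAt)
      | exact vf_bk p (d10.differentiableAt) | exact vf_bk p (r10.differentiableAt)
      | exact vf_ks2 p (d7.differentiableAt) | exact vf_ks2 p (r7.differentiableAt)
      | exact vf_ks2 p (d10.differentiableAt) | exact vf_ks2 p (r10.differentiableAt)
      | exact vf_k2sc p (((h7.differentiable (by simp))).differentiableAt)
      | exact vf_k2sc p (((h10.differentiable (by simp))).differentiableAt)
      | exact vf_s2mc2 p
      | exact vf_cotθ p hs

set_option maxHeartbeats 1000000 in
lemma Γθ_vf {D : ConnData} (hD : D.Smooth) (p : Pt) (hs : Real.sin (p 2) ≠ 0)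
    (c a e : Fin 4) : VF (fun q => Γθ D q c a e) p := by
  obtain ⟨h1, h2, h3, h4, h5, h6, h7, h8, h9, h10⟩ := hD
  have d1 := (contDiff_pdt h1).differentiable (by simp); have r1 := (contDiff_pdr h1).differentiable (by simp)
  have d2 := (contDiff_pdt h2).differentiable (by simp); have r2 := (contDiff_pdr h2).differentiable (by simp)
  have d3 := (contDiff_pdt h3).differentiable (by simp); have r3 := (contDiff_pdr h3).differentiable (by simp)
  have d4 := (contDiff_pdt h4).differentiable (by simp); have r4 := (contDiff_pdr h4).differentiable (by simp)
  have d5 := (contDiff_pdt h5).differentiable (by simp); have r5 := (contDiff_pdr h5).differentiable (by simp)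
  have d6 := (contDiff_pdt h6).differentiable (by simp); have r6 := (contDiff_pdr h6).differentiable (by simp)
  have d7 := (contDiff_pdt h7).differentiable (by simp); have r7 := (contDiff_pdr h7).differentiable (by simp)
  have d8 := (contDiff_pdt h8).differentiable (by simp); have r8 := (contDiff_pdr h8).differentiable (by simp)
  have d9 := (contDiff_pdt h9).differentiable (by simp); have r9 := (contDiff_pdr h9).differentiable (by simp)
  have d10 := (contDiff_pdt h10).differentiable (by simp); have r10 := (contDiff_pdr h10).differentiable (by simp)
  fin_cases c <;> fin_cases a <;> fin_cases e <;>
    simp only [Γθ, Matrix.cons_val', Matrix.cons_val_zero, Matrix.cons_val_one,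
      Matrix.head_cons, Matrix.empty_val', Matrix.cons_val_fin_one, Matrix.head_fin_const,
      Matrix.cons_val_two, Matrix.cons_val_three, Matrix.tail_cons, Matrix.of_apply,
      Fin.isValue, Matrix.cons_val, Fin.zero_eta, Fin.mk_one, Fin.reduceFinMk] <;>
    first
      | exact vf_const 0 p
      | exact vf_const _ p
      | exact vf_bk p (d1.differentiableAt) | exact vf_bk p (r1.differentiableAt)
      | exact vf_bk p (d2.differentiableAt) | exact vf_bk p (r2.differentiableAt)
      | exact vf_bk p (d3.differentiableAt) | exact vf_bk p (r3.differentiableAt)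
      | exact vf_bk p (d4.differentiableAt) | exact vf_bk p (r4.differentiableAt)
      | exact vf_bk p (d5.differentiableAt) | exact vf_bk p (r5.differentiableAt)
      | exact vf_bk p (d6.differentiableAt) | exact vf_bk p (r6.differentiableAt)
      | exact vf_bk p (d7.differentiableAt) | exact vf_bk p (r7.differentiableAt)
      | exact vf_bk p (d8.differentiableAt) | exact vf_bk p (r8.differentiableAt)
      | exact vf_bk p (d9.differentiableAt) | exact vf_bk p (r9.differentiableAt)
      | exact vf_bk p (d10.differentiableAt) | exact vf_bk p (r10.differentiableAt)
      | exact vf_ks2 p (d7.differentiableAt) | exact vf_ks2 p (r7.differentiableAt)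
      | exact vf_ks2 p (d10.differentiableAt) | exact vf_ks2 p (r10.differentiableAt)
      | exact vf_k2sc p (((h7.differentiable (by simp))).differentiableAt)
      | exact vf_k2sc p (((h10.differentiable (by simp))).differentiableAt)
      | exact vf_s2mc2 p
      | exact vf_cotθ p hs

lemma ΓD_vf {D : ConnData} (hD : D.Smooth) (p : Pt) (hs : Real.sin (p 2) ≠ 0)
    (b c a e : Fin 4) : VF (fun q => ΓD D b q c a e) p := by
  fin_cases b
  · exact Γt_vf hD p hs c a e
  · exact Γr_vf hD p hs c a e
  · exact Γθ_vf hD p hs c a e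
  · simp only [ΓD, Matrix.cons_val', Matrix.cons_val_one, Matrix.head_cons, Matrix.cons_val_three,
      Matrix.tail_cons, Pi.zero_apply, Matrix.zero_apply]
    exact vf_const 0 p

lemma RiemC_vf {D : ConnData} (hD : D.Smooth) (p : Pt) (hs : Real.sin (p 2) ≠ 0)
    (c e a b : Fin 4) : VF (fun q => RiemC D c e a b q) p := by
  simp only [RiemC, Fin.sum_univ_four]
  have g := Γmat_vf hD p hs
  refine ((ΓD_vf hD p hs b c a e).sub (ΓD_vf hD p hs a c b e)).add ?_
  refine VF.add ?_ (((g c b 3).mul (g 3 a e)).sub ((g c a 3).mul (g 3 b e)))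
  refine VF.add ?_ (((g c b 2).mul (g 2 a e)).sub ((g c a 2).mul (g 2 b e)))
  exact ((((g c b 0).mul (g 0 a e)).sub ((g c a 0).mul (g 0 b e))).add
    (((g c b 1).mul (g 1 a e)).sub ((g c a 1).mul (g 1 b e))))

lemma single_v_h (b : Fin 4) (j : Fin 8) (hj : j.val < 4) :
    (Pi.single (vIdx b) (1:ℝ) : Pt) j = 0 := by
  apply Pi.single_eq_of_ne
  intro h
  have h2 := congrArg Fin.val h
  simp only [vIdx] at h2
  omega

lemma single_v_v (b e : Fin 4) :
    (Pi.single (vIdx b) (1:ℝ) : Pt) (vIdx e) = if e = b then 1 else 0 := by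
  rw [Pi.single_apply]
  by_cases h : e = b
  · subst h; simp
  · rw [if_neg h, if_neg (fun hh => h ((vIdx_inj_iff e b).1 hh))]

lemma fderiv_fiberlin {F : Fin 4 → Pt → ℝ} {p : Pt} (hF : ∀ e, VF (F e) p) (b : Fin 4) :
    fderiv ℝ (fun q => ∑ e : Fin 4, q (vIdx e) * F e q) p (Pi.single (vIdx b) 1) = F b p := by
  choose ft fr fθ h3 using hF
  have h : HasFDerivAt (fun q => ∑ e : Fin 4, q (vIdx e) * F e q)
      (∑ e : Fin 4, (p (vIdx e) • L3 (ft e) (fr e) (fθ e) + F e p • prj (vIdx e))) p :=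
    HasFDerivAt.fun_sum (fun e _ => (prj (vIdx e)).hasFDerivAt.mul (h3 e))
  rw [h.fderiv]
  simp only [ContinuousLinearMap.sum_apply, ContinuousLinearMap.add_apply,
    ContinuousLinearMap.coe_smul', Pi.smul_apply, prj_apply, L3_apply, smul_eq_mul,
    Fin.sum_univ_four]
  rw [single_v_h b 0 (by norm_num), single_v_h b 1 (by norm_num), single_v_h b 2 (by norm_num),
    single_v_v, single_v_v, single_v_v, single_v_v]
  fin_cases b <;> simp

lemma isOpen_dom : IsOpen {q : Pt | Real.sin (q 2) ≠ 0} := by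
  have hc : Continuous fun q : Pt => Real.sin (q 2) :=
    Real.continuous_sin.comp (continuous_apply 2)
  exact IsOpen.preimage hc isOpen_ne

lemma vd_rcurv {D : ConnData} (hD : D.Smooth) (p : Pt) (hs : Real.sin (p 2) ≠ 0)
    (c a b b' : Fin 4) : vd b' (Rcurv D c a b) p = RiemC D c b' a b p := by
  rw [vd]
  have hev : Rcurv D c a b =ᶠ[nhds p]
      fun q => ∑ e : Fin 4, q (vIdx e) * RiemC D c e a b q := by
    filter_upwards [isOpen_dom.mem_nhds hs] with q hq
    exact rcurv_eq hD q hq c a b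
  rw [hev.fderiv_eq, fderiv_fiberlin (fun e => RiemC_vf hD p hs c e a b) b']

lemma ric_eq {D : ConnData} (hD : D.Smooth) (p : Pt) (hs : Real.sin (p 2) ≠ 0)
    (b c : Fin 4) : Ric D b c p = ∑ a : Fin 4, RiemC D a b c a p := by
  rw [Ric]
  exact Finset.sum_congr rfl fun a _ => vd_rcurv hD p hs a c a b


set_option maxHeartbeats 1000000 in
/-- The connection Ricci tensor is symmetric on the domain `sin θ ≠ 0`
if and only if `a₁ + a₄ + 2a₅ = 0` identically. -/
theorem statement_2 (D : ConnData) (hD : D.Smooth) :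
    (∀ p : Pt, Real.sin (p 2) ≠ 0 → ∀ b c : Fin 4, Ric D b c p = Ric D c b p) ↔
      (∀ x : ℝ × ℝ, a1 D x + a4 D x + 2 * a5 D x = 0) := by
  constructor
  · intro H x
    set p : Pt := ![x.1, x.2, Real.pi/2, 0, 0, 0, 0, 0] with hp
    have h2 : p 2 = Real.pi/2 := rfl
    have h0 : p 0 = x.1 := rfl
    have h1 : p 1 = x.2 := rfl
    have hs : Real.sin (p 2) ≠ 0 := by
      rw [h2, Real.sin_pi_div_two]; norm_num
    have h := H p hs 0 1
    rw [ric_eq hD p hs 0 1, ric_eq hD p hs 1 0] at h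
    simp only [RiemC, ΓD, Fin.sum_univ_four, Γt, Γr, Γθ, Γmat, Matrix.cons_val',
      Matrix.cons_val_zero, Matrix.cons_val_one, Matrix.head_cons, Matrix.empty_val',
      Matrix.cons_val_fin_one, Matrix.head_fin_const, Matrix.cons_val_two, Matrix.cons_val_three,
      Matrix.tail_cons, Matrix.of_apply, Fin.isValue, Matrix.zero_apply, Pi.zero_apply,
      h0, h1, h2, Real.sin_pi_div_two, Real.cos_pi_div_two, Prod.mk.eta] at h
    simp only [a1, a4, a5]
    first
      | linear_combination h
      | linear_combination -h
  · intro H p hs b c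
    have hx := H (p 0, p 1)
    simp only [a1, a4, a5] at hx
    have e01 : Ric D 0 1 p = Ric D 1 0 p := by
      rw [ric_eq hD p hs 0 1, ric_eq hD p hs 1 0]
      simp only [RiemC, ΓD, Fin.sum_univ_four, Γt, Γr, Γθ, Γmat, Matrix.cons_val',
        Matrix.cons_val_zero, Matrix.cons_val_one, Matrix.head_cons, Matrix.empty_val',
        Matrix.cons_val_fin_one, Matrix.head_fin_const, Matrix.cons_val_two,
        Matrix.cons_val_three, Matrix.tail_cons, Matrix.of_apply, Fin.isValue,
        Matrix.zero_apply, Pi.zero_apply]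
      first
        | linear_combination hx
        | linear_combination -hx
    have e02 : Ric D 0 2 p = Ric D 2 0 p := by
      rw [ric_eq hD p hs 0 2, ric_eq hD p hs 2 0]
      simp only [RiemC, ΓD, Fin.sum_univ_four, Γt, Γr, Γθ, Γmat, Matrix.cons_val',
        Matrix.cons_val_zero, Matrix.cons_val_one, Matrix.head_cons, Matrix.empty_val',
        Matrix.cons_val_fin_one, Matrix.head_fin_const, Matrix.cons_val_two,
        Matrix.cons_val_three, Matrix.tail_cons, Matrix.of_apply, Fin.isValue,
        Matrix.zero_apply, Pi.zero_apply]
      ring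
    have e03 : Ric D 0 3 p = Ric D 3 0 p := by
      rw [ric_eq hD p hs 0 3, ric_eq hD p hs 3 0]
      simp only [RiemC, ΓD, Fin.sum_univ_four, Γt, Γr, Γθ, Γmat, Matrix.cons_val',
        Matrix.cons_val_zero, Matrix.cons_val_one, Matrix.head_cons, Matrix.empty_val',
        Matrix.cons_val_fin_one, Matrix.head_fin_const, Matrix.cons_val_two,
        Matrix.cons_val_three, Matrix.tail_cons, Matrix.of_apply, Fin.isValue,
        Matrix.zero_apply, Pi.zero_apply]
      ring
    have e12 : Ric D 1 2 p = Ric D 2 1 p := by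
      rw [ric_eq hD p hs 1 2, ric_eq hD p hs 2 1]
      simp only [RiemC, ΓD, Fin.sum_univ_four, Γt, Γr, Γθ, Γmat, Matrix.cons_val',
        Matrix.cons_val_zero, Matrix.cons_val_one, Matrix.head_cons, Matrix.empty_val',
        Matrix.cons_val_fin_one, Matrix.head_fin_const, Matrix.cons_val_two,
        Matrix.cons_val_three, Matrix.tail_cons, Matrix.of_apply, Fin.isValue,
        Matrix.zero_apply, Pi.zero_apply]
      ring
    have e13 : Ric D 1 3 p = Ric D 3 1 p := by
      rw [ric_eq hD p hs 1 3, ric_eq hD p hs 3 1]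
      simp only [RiemC, ΓD, Fin.sum_univ_four, Γt, Γr, Γθ, Γmat, Matrix.cons_val',
        Matrix.cons_val_zero, Matrix.cons_val_one, Matrix.head_cons, Matrix.empty_val',
        Matrix.cons_val_fin_one, Matrix.head_fin_const, Matrix.cons_val_two,
        Matrix.cons_val_three, Matrix.tail_cons, Matrix.of_apply, Fin.isValue,
        Matrix.zero_apply, Pi.zero_apply]
      ring
    have e23 : Ric D 2 3 p = Ric D 3 2 p := by
      rw [ric_eq hD p hs 2 3, ric_eq hD p hs 3 2]
      simp only [RiemC, ΓD, Fin.sum_univ_four, Γt, Γr, Γθ, Γmat, Matrix.cons_val',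
        Matrix.cons_val_zero, Matrix.cons_val_one, Matrix.head_cons, Matrix.empty_val',
        Matrix.cons_val_fin_one, Matrix.head_fin_const, Matrix.cons_val_two,
        Matrix.cons_val_three, Matrix.tail_cons, Matrix.of_apply, Fin.isValue,
        Matrix.zero_apply, Pi.zero_apply]
      ring
    fin_cases b <;> fin_cases c <;>
      first
        | rfl
        | exact e01 | exact e01.symm
        | exact e02 | exact e02.symm
        | exact e03 | exact e03.symm
        | exact e12 | exact e12.symm
        | exact e13 | exact e13.symm
        | exact e23 | exact e23.symm

end
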